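/- arXiv:2504.02601 — 4 statements merged into one kernel-verified Lean document; each statement's English description precedes it below -/
import Mathlib

section
/- If the projective dimension of R_S as an R-module is at most 1, then the projective dimension of every S-strongly flat R-module is at most 1. -/
open CategoryTheory

noncomputable def ext1Zero (R : Type) [CommRing R] (M N : Type) [AddCommGroup M] [Module R M]
    [AddCommGroup N] [Module R N] : Prop :=
  Subsingleton (((Ext R (ModuleCat R) 1).obj (Opposite.op (ModuleCat.of R M))).obj
    (ModuleCat.of R N))

/-- An `R`-module `C` is `S`-weakly cotorsion if `Ext¹_R(R_S, C) = 0`. -/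
noncomputable def SWeaklyCotorsion (R : Type) [CommRing R] (S : Submonoid R) (C : Type)
    [AddCommGroup C] [Module R C] : Prop :=
  ext1Zero R (Localization S) C

/-- An `R`-module `F` is `S`-strongly flat if `Ext¹_R(F, C) = 0` for every
`S`-weakly cotorsion `R`-module `C`. -/
noncomputable def SStronglyFlat (R : Type) [CommRing R] (S : Submonoid R) (F : Type)
    [AddCommGroup F] [Module R F] : Prop :=
  ∀ (C : Type) [AddCommGroup C] [Module R C], SWeaklyCotorsion R S C → ext1Zero R F C

/-- `pdLeOne R M` says that the projective dimension of `M` over `R` is at most `1`,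
i.e. there is a short exact sequence `0 → P₁ → P₀ → M → 0` with `P₀, P₁` projective. -/
def pdLeOne (R : Type) [CommRing R] (M : Type) [AddCommGroup M] [Module R M] : Prop :=
  ∃ (P₀ P₁ : ModuleCat R) (f : P₁ ⟶ P₀) (g : P₀ ⟶ ModuleCat.of R M),
    Projective P₀ ∧ Projective P₁ ∧
    Function.Injective f ∧ Function.Surjective g ∧ LinearMap.range f.hom = LinearMap.ker g.hom

/-!
Write `0 → K → P → F → 0` with `P` projective; it suffices that `K` is projective.
Every quotient `I ⧸ V` of an injective module is `S`-weakly cotorsion: computing `Ext¹` with a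
resolution `0 → P₁ → P₀ → R_S → 0`, a map `P₁ → I ⧸ V` lifts to `I` and then extends to `P₀`.
Hence `Ext¹(F, I ⧸ V) = 0`, i.e. every map `K → I ⧸ V` extends to `P`.
Now take `0 → N → Q → K → 0` with `Q` projective and `N ⊆ I` injective, and extend `N ⊆ I` to
`ξ : Q → I`. The map `K → I ⧸ N` induced by `ξ` extends to `P` and then lifts to `H : P → I`;
the difference `ξ - H ∘ (K → P) ∘ (Q → K)` takes values in `N` and is the identity on `N`, so
`0 → N → Q → K → 0` splits and `K` is a direct summand of `Q`.
-/

open Limits ZeroObject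

universe u

namespace LinearMap

variable {R : Type*} [Ring R] {A B C : Type*} [AddCommGroup A] [Module R A] [AddCommGroup B]
  [Module R B] [AddCommGroup C] [Module R C]

lemma exists_comp_eq_of_surjective_of_ker_le {q : A →ₗ[R] B} (hq : Function.Surjective q)
    {u : A →ₗ[R] C} (h : ker q ≤ ker u) : ∃ v : B →ₗ[R] C, v ∘ₗ q = u :=
  ⟨(ker q).liftQ u h ∘ₗ (q.quotKerEquivOfSurjective hq).symm, by ext; simp⟩

lemma exists_comp_eq_of_injective_of_range_le {i : A →ₗ[R] B} (hi : Function.Injective i)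
    {u : C →ₗ[R] B} (h : range u ≤ range i) : ∃ v : C →ₗ[R] A, i ∘ₗ v = u :=
  ⟨(LinearEquiv.ofInjective i hi).symm ∘ₗ u.codRestrict _ fun c => h ⟨c, rfl⟩,
    by ext; simp⟩

end LinearMap

namespace CategoryTheory.ShortComplex

variable {C : Type*} [Category* C] [Abelian C] (S : ShortComplex C)

noncomputable def toChainComplex : ChainComplex C ℕ :=
  ChainComplex.of (fun | 0 => S.X₂ | 1 => S.X₁ | _ + 2 => 0)
    (fun | 0 => S.f | _ + 1 => 0) (by rintro (_ | _) <;> simp)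

@[simp]
lemma toChainComplex_d_one_zero : S.toChainComplex.d 1 0 = S.f := by
  simp [toChainComplex, ChainComplex.of.d]

@[simp]
lemma toChainComplex_d_two_one : S.toChainComplex.d 2 1 = 0 := by
  simp [toChainComplex, ChainComplex.of.d]; rfl

variable {S}

noncomputable def ShortExact.projectiveResolution (hS : S.ShortExact) [Projective S.X₁]
    [Projective S.X₂] : ProjectiveResolution S.X₃ where
  complex := S.toChainComplex
  projective
    | 0 => inferInstanceAs (Projective S.X₂)
    | 1 => inferInstanceAs (Projective S.X₁)
    | _ + 2 => (isZero_zero C).projective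
  π := (ChainComplex.toSingle₀Equiv _ _).symm
    ⟨S.g, by rw [toChainComplex_d_one_zero]; exact S.zero⟩
  quasiIso := ⟨fun n => by
    match n with
    | 0 =>
      rw [ChainComplex.quasiIsoAt₀_iff, ShortComplex.quasiIso_iff_of_zeros' _ rfl rfl rfl]
      refine (ShortComplex.exact_and_epi_g_iff_of_iso ?_).2 ⟨hS.exact, hS.epi_g⟩
      exact ShortComplex.isoMk (Iso.refl _) (Iso.refl _) (Iso.refl _)
        (by erw [Category.id_comp, Category.comp_id]; exact S.toChainComplex_d_one_zero.symm)
        (by erw [Category.id_comp, Category.comp_id]; exact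
          (ChainComplex.toSingle₀Equiv_symm_apply_f_zero (C := S.toChainComplex) S.g _).symm)
    | 1 =>
      rw [quasiIsoAt_iff_exactAt' _ _ (ChainComplex.exactAt_succ_single_obj _ _),
        HomologicalComplex.exactAt_iff' _ 2 1 0 (by simp) (by simp),
        ShortComplex.exact_iff_mono _ S.toChainComplex_d_two_one]
      show Mono (S.toChainComplex.d 1 0)
      rw [toChainComplex_d_one_zero]
      exact hS.mono_f
    | n + 2 =>
      rw [quasiIsoAt_iff_exactAt' _ _ (ChainComplex.exactAt_succ_single_obj _ _),
        HomologicalComplex.exactAt_iff]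
      exact ShortComplex.exact_of_isZero_X₂ _ (isZero_zero C)⟩

end CategoryTheory.ShortComplex

theorem ModuleCat.projective_of_forall_extend_to_injective_quotient {R : Type u} [Ring R]
    {K P : ModuleCat.{u} R} [Projective P] (i : K ⟶ P)
    (h : ∀ (I : ModuleCat.{u} R) [Injective I] (V : Submodule R I) (κ : K →ₗ[R] I ⧸ V),
      ∃ g : P →ₗ[R] I ⧸ V, g ∘ₗ i.hom = κ) :
    Projective K := by
  let q := (Projective.π K).hom
  have hq : Function.Surjective q := (ModuleCat.epi_iff_surjective _).1 inferInstance
  let N := LinearMap.ker q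
  let ι : ModuleCat.of R N ⟶ Projective.over K := ModuleCat.ofHom N.subtype
  have : Mono ι := (ModuleCat.mono_iff_injective ι).2 N.injective_subtype
  let I := Injective.under (ModuleCat.of R N)
  let ν := (Injective.ι (ModuleCat.of R N)).hom
  have hν : Function.Injective ν := (ModuleCat.mono_iff_injective _).1 inferInstance
  let ξ := (Injective.factorThru (Injective.ι _) ι).hom
  have hξ (n : N) : ξ n = ν n :=
    ConcreteCategory.congr_hom (Injective.comp_factorThru (Injective.ι _) ι) n
  obtain ⟨κ, hκ⟩ := LinearMap.exists_comp_eq_of_surjective_of_ker_le hq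
    (u := (LinearMap.range ν).mkQ ∘ₗ ξ) fun x hx => by
      simp only [LinearMap.mem_ker, LinearMap.comp_apply, Submodule.mkQ_apply,
        Submodule.Quotient.mk_eq_zero]
      exact hξ ⟨x, hx⟩ ▸ LinearMap.mem_range_self ν _
  obtain ⟨g, hg⟩ := h I _ κ
  obtain ⟨H, hH⟩ := Module.projective_lifting_property _ g (Submodule.mkQ_surjective _)
  let θ := ξ - H ∘ₗ i.hom ∘ₗ q
  obtain ⟨τ, hτ⟩ := LinearMap.exists_comp_eq_of_injective_of_range_le hν (u := θ) (by
    rintro _ ⟨x, rfl⟩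
    rw [← Submodule.ker_mkQ (LinearMap.range ν), LinearMap.mem_ker]
    have hξx : (LinearMap.range ν).mkQ (ξ x) = κ (q x) := (LinearMap.congr_fun hκ x).symm
    have hHx : (LinearMap.range ν).mkQ (H (i (q x))) = κ (q x) :=
      (LinearMap.congr_fun hH _).trans (LinearMap.congr_fun hg _)
    simp only [θ, LinearMap.sub_apply, LinearMap.comp_apply, map_sub, hξx, hHx, sub_self])
  have hτN : τ ∘ₗ N.subtype = LinearMap.id := LinearMap.ext fun n => hν <| by
    have hqn : q n = 0 := n.2
    rw [LinearMap.comp_apply, ← LinearMap.comp_apply ν τ, hτ]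
    simp [θ, hξ, hqn]
  have hsplit : (∃ s, q ∘ₗ s = LinearMap.id) ↔ ∃ r, r ∘ₗ N.subtype = LinearMap.id :=
    (Function.Exact.split_tfae (LinearMap.exact_subtype_ker_map q) N.injective_subtype hq).out 0 1
  obtain ⟨s, hs⟩ := hsplit.2 ⟨τ, hτN⟩
  exact Retract.projective (Y := Projective.over K)
    ⟨ModuleCat.ofHom s, Projective.π K, ModuleCat.hom_ext hs⟩

variable {R : Type} [CommRing R]

lemma ext1Zero_iff_of_projectiveResolution {M N : Type} [AddCommGroup M] [Module R M]
    [AddCommGroup N] [Module R N] (P : ProjectiveResolution (ModuleCat.of R M)) :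
    ext1Zero R M N ↔ ∀ φ : P.complex.X 1 ⟶ ModuleCat.of R N, P.complex.d 2 1 ≫ φ = 0 →
      ∃ ψ : P.complex.X 0 ⟶ ModuleCat.of R N, P.complex.d 1 0 ≫ ψ = φ := by
  rw [ext1Zero, (P.isoExt 1 _).toLinearEquiv.toEquiv.subsingleton_congr,
    ← ModuleCat.isZero_iff_subsingleton, ← HomologicalComplex.exactAt_iff_isZero_homology,
    HomologicalComplex.exactAt_iff' _ 0 1 2 (by simp) (by simp), ShortComplex.moduleCat_exact_iff]
  rfl

lemma CategoryTheory.ProjectiveResolution.exists_comp_subtype_eq_of_ext1Zero {M N : Type}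
    [AddCommGroup M] [Module R M] [AddCommGroup N] [Module R N]
    (P : ProjectiveResolution (ModuleCat.of R M))
    (hMN : ext1Zero R M N) (κ : LinearMap.ker (P.π.f 0).hom →ₗ[R] N) :
    ∃ ψ : P.complex.X 0 →ₗ[R] N, ψ ∘ₗ (LinearMap.ker (P.π.f 0).hom).subtype = κ := by
  let d : P.complex.X 1 →ₗ[R] LinearMap.ker (P.π.f 0).hom :=
    (P.complex.d 1 0).hom.codRestrict _ fun x =>
      ConcreteCategory.congr_hom P.complex_d_comp_π_f_zero x
  obtain ⟨ψ, hψ⟩ :=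
      (ext1Zero_iff_of_projectiveResolution P).1 hMN (ModuleCat.ofHom (κ ∘ₗ d)) <| by
    ext x
    have : d (P.complex.d 2 1 x) = 0 :=
      Subtype.ext (ConcreteCategory.congr_hom (P.complex.d_comp_d 2 1 0) x)
    show κ (d (P.complex.d 2 1 x)) = 0
    rw [this, map_zero]
  refine ⟨ψ.hom, LinearMap.ext fun ⟨k, hk⟩ => ?_⟩
  obtain ⟨x, rfl⟩ := (ShortComplex.moduleCat_exact_iff _).1 P.exact₀ k hk
  exact ConcreteCategory.congr_hom hψ x

lemma ext1Zero_quotient_of_pdLeOne {M : Type} [AddCommGroup M] [Module R M] (hM : pdLeOne R M)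
    (I : ModuleCat R) [Injective I] (V : Submodule R I) : ext1Zero R M (I ⧸ V) := by
  obtain ⟨P₀, P₁, f, g, _, _, hf, hg, hfg⟩ := hM
  have hfg : Function.Exact f g := LinearMap.exact_iff.2 hfg.symm
  have hS :
      (ShortComplex.mk f g (ModuleCat.hom_ext hfg.linearMap_comp_eq_zero)).ShortExact :=
    ModuleCat.shortComplex_shortExact _ hfg hf hg
  rw [ext1Zero_iff_of_projectiveResolution hS.projectiveResolution]
  intro (φ : P₁ ⟶ ModuleCat.of R (I ⧸ V)) _
  let π : I ⟶ ModuleCat.of R (I ⧸ V) := ModuleCat.ofHom V.mkQ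
  have : Epi π := (ModuleCat.epi_iff_surjective _).2 V.mkQ_surjective
  have : Mono f := (ModuleCat.mono_iff_injective f).2 hf
  refine ⟨(Injective.factorThru (Projective.factorThru φ π) f ≫ π : P₀ ⟶ _), ?_⟩
  change f ≫ _ = φ
  rw [← Category.assoc, Injective.comp_factorThru, Projective.factorThru_comp]

theorem stmt_6 (R : Type) [CommRing R] (S : Submonoid R)
    (hpd : pdLeOne R (Localization S))
    (F : Type) [AddCommGroup F] [Module R F] (hF : SStronglyFlat R S F) :
    pdLeOne R F := by
  let P := ProjectiveResolution.of (ModuleCat.of R F)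
  let K := LinearMap.ker (P.π.f 0).hom
  have hK : Projective (ModuleCat.of R K) :=
    ModuleCat.projective_of_forall_extend_to_injective_quotient (P := P.complex.X 0)
      (ModuleCat.ofHom K.subtype) fun I _ V κ =>
        P.exists_comp_subtype_eq_of_ext1Zero (hF _ (ext1Zero_quotient_of_pdLeOne hpd I V)) κ
  have hπ : Function.Surjective (P.π.f 0) :=
    (ModuleCat.epi_iff_surjective (P.π.f 0)).1 inferInstance
  exact ⟨P.complex.X 0, ModuleCat.of R K, ModuleCat.ofHom K.subtype, P.π.f 0, inferInstance, hK,
    K.injective_subtype, hπ, K.range_subtype⟩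
end

section
/- If F is an S-strongly flat R-module, then for every s ∈ S the quotient module F/sF is a projective R/sR-module. -/
/-!
Write `A = R/sR` and `P = F/sF`, and let `π : A^(P) → P` be the canonical free presentation of
the `A`-module `P`. Its kernel `K` is killed by `s`, while `s` acts invertibly on `R_S`, which
forces `Ext¹_R(R_S, K) = 0`. Strong flatness then gives `Ext¹_R(F, K) = 0`, so the projection
`F → P` lifts `R`-linearly through `π`. The lift kills `sF`, so it descends to an `A`-linear
section of `π`, and `P` is a direct summand of a free `A`-module.
-/

open CategoryTheory

theorem LinearMap.exists_comp_eq_of_ker_le {R M N Q : Type*} [Ring R] [AddCommGroup M]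
    [Module R M] [AddCommGroup N] [Module R N] [AddCommGroup Q] [Module R Q] {f : M →ₗ[R] N}
    (hf : Function.Surjective f) {g : M →ₗ[R] Q} (h : LinearMap.ker f ≤ LinearMap.ker g) :
    ∃ φ : N →ₗ[R] Q, φ ∘ₗ f = g :=
  ⟨(LinearMap.ker f).liftQ g h ∘ₗ (f.quotKerEquivOfSurjective hf).symm.toLinearMap,
    by ext; simp⟩

section

variable {R : Type*} [CommRing R]

theorem Ideal.Quotient.smul_eq_zero_of_mem {I : Ideal R} {M : Type*} [AddCommGroup M]
    [Module R M] [Module (R ⧸ I) M] [IsScalarTower R (R ⧸ I) M] {r : R} (hr : r ∈ I) (m : M) :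
    r • m = 0 := by
  rw [← algebraMap_smul (R ⧸ I) r m, Ideal.Quotient.algebraMap_eq,
    Ideal.Quotient.eq_zero_iff_mem.mpr hr, zero_smul]

theorem Module.Projective.quotient_ideal_smul_top_of_exists_lift {I : Ideal R} {F : Type*}
    [AddCommGroup F] [Module R F]
    (h : ∃ f : F →ₗ[R] ((F ⧸ I • (⊤ : Submodule R F)) →₀ R ⧸ I),
      (Finsupp.linearCombination (R ⧸ I) id).restrictScalars R ∘ₗ f =
        (I • (⊤ : Submodule R F)).mkQ) :
    Module.Projective (R ⧸ I) (F ⧸ I • (⊤ : Submodule R F)) := by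
  obtain ⟨f, hf⟩ := h
  have hI : I • (⊤ : Submodule R F) ≤ LinearMap.ker f := Submodule.smul_le.mpr fun r hr x _ => by
    rw [LinearMap.mem_ker, map_smul, Ideal.Quotient.smul_eq_zero_of_mem hr]
  rw [Module.projective_def']
  refine ⟨((I • (⊤ : Submodule R F)).liftQ f hI).extendScalarsOfSurjective
    Ideal.Quotient.mk_surjective, LinearMap.ext fun x => ?_⟩
  obtain ⟨x, rfl⟩ := Submodule.mkQ_surjective _ x
  exact congr($hf x)

end

namespace CategoryTheory.ProjectiveResolution

variable {R : Type} [CommRing R] {X : ModuleCat.{0} R} (P : ProjectiveResolution X)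
  (Y : ModuleCat.{0} R)

theorem subsingleton_ext_one_iff :
    Subsingleton (((Ext R (ModuleCat R) 1).obj (Opposite.op X)).obj Y) ↔
      ∀ g : P.complex.X 1 ⟶ Y, P.complex.d 2 1 ≫ g = 0 →
        ∃ f : P.complex.X 0 ⟶ Y, P.complex.d 1 0 ≫ f = g := by
  rw [(P.isoExt 1 Y).toLinearEquiv.toEquiv.subsingleton_congr,
    ← ModuleCat.isZero_iff_subsingleton, ← HomologicalComplex.exactAt_iff_isZero_homology,
    HomologicalComplex.exactAt_iff' _ 0 1 2 (by simp) (by simp),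
    ShortComplex.moduleCat_exact_iff]
  exact Iff.rfl

theorem subsingleton_ext_one_iff_forall_exists_comp_subtype_eq :
    Subsingleton (((Ext R (ModuleCat R) 1).obj (Opposite.op X)).obj Y) ↔
      ∀ φ : LinearMap.ker (P.π.f 0).hom →ₗ[R] Y,
        ∃ f : P.complex.X 0 →ₗ[R] Y, f ∘ₗ (LinearMap.ker (P.π.f 0).hom).subtype = φ := by
  have hd₁ : LinearMap.range (P.complex.d 1 0).hom = LinearMap.ker (P.π.f 0).hom :=
    (ShortComplex.exact_of_g_is_cokernel (.mk _ _ P.complex_d_comp_π_f_zero)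
      P.isColimitCokernelCofork).moduleCat_range_eq_ker
  have hd₂ : LinearMap.range (P.complex.d 2 1).hom = LinearMap.ker (P.complex.d 1 0).hom :=
    (P.exact_succ 0).moduleCat_range_eq_ker
  let d : P.complex.X 1 →ₗ[R] LinearMap.ker (P.π.f 0).hom :=
    (P.complex.d 1 0).hom.codRestrict _ fun z => hd₁ ▸ LinearMap.mem_range_self _ z
  have hd : Function.Surjective d := by
    rintro ⟨x, hx⟩
    obtain ⟨z, rfl⟩ := hd₁ ▸ hx
    exact ⟨z, rfl⟩
  rw [subsingleton_ext_one_iff]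
  constructor
  · intro H φ
    have hdd (w : P.complex.X 2) : d ((P.complex.d 2 1).hom w) = 0 :=
      Subtype.ext congr(($(P.complex.d_comp_d 2 1 0)).hom w)
    obtain ⟨f, hf⟩ := H (ModuleCat.ofHom (φ ∘ₗ d)) <| by
      ext w
      exact (congrArg φ (hdd w)).trans (map_zero φ)
    refine ⟨f.hom, ?_⟩
    ext ⟨x, hx⟩
    obtain ⟨z, rfl⟩ := hd₁ ▸ hx
    exact congr(($hf).hom z)
  · intro H g hg
    have hker : LinearMap.ker d ≤ LinearMap.ker g.hom := by
      rw [LinearMap.ker_codRestrict, ← hd₂]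
      rintro _ ⟨w, rfl⟩
      exact congr(($hg).hom w)
    obtain ⟨φ, hφ⟩ := LinearMap.exists_comp_eq_of_ker_le hd hker
    obtain ⟨f, rfl⟩ := H φ
    exact ⟨ModuleCat.ofHom f, by ext z; rw [← hφ]; rfl⟩

end CategoryTheory.ProjectiveResolution

section

variable {R : Type} [CommRing R]

theorem exists_comp_eq_of_ext1Zero {X M N : Type} [AddCommGroup X] [Module R X]
    [AddCommGroup M] [Module R M] [AddCommGroup N] [Module R N] {π : M →ₗ[R] N}
    (hπ : Function.Surjective π) (hX : ext1Zero R X (LinearMap.ker π)) (g : X →ₗ[R] N) :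
    ∃ h : X →ₗ[R] M, π ∘ₗ h = g := by
  let P := ProjectiveResolution.of (ModuleCat.of R X)
  set π₀ : P.complex.X 0 →ₗ[R] X := (P.π.f 0).hom
  have hπ₀ : Function.Surjective π₀ := (ModuleCat.epi_iff_surjective _).mp inferInstance
  obtain ⟨l, hl⟩ := Module.projective_lifting_property π (g ∘ₗ π₀) hπ
  have hlΩ (ω : LinearMap.ker π₀) : l ω ∈ LinearMap.ker π := by
    simpa [ω.2] using congr($hl ω)
  -- Correct `l` by an extension `P₀ → ker π` of `l|ker π₀`, so that it descends to `X`.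
  obtain ⟨f, hf⟩ := (P.subsingleton_ext_one_iff_forall_exists_comp_subtype_eq _).mp hX
    ((l ∘ₗ (LinearMap.ker π₀).subtype).codRestrict _ hlΩ)
  obtain ⟨h, hh⟩ := LinearMap.exists_comp_eq_of_ker_le hπ₀
    (g := l - (LinearMap.ker π).subtype ∘ₗ f) fun x hx =>
      sub_eq_zero.mpr (congrArg Subtype.val (LinearMap.congr_fun hf ⟨x, hx⟩)).symm
  refine ⟨h, (LinearMap.cancel_right hπ₀).mp (LinearMap.ext fun x => ?_)⟩
  calc π (h (π₀ x)) = π (l x - f x) := congr(π ($hh x))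
    _ = g (π₀ x) := by rw [map_sub, (f x).2, sub_zero]; exact congr($hl x)

theorem ext1Zero_of_isUnit_of_smul_eq_zero {X Y : Type} [AddCommGroup X] [Module R X]
    [AddCommGroup Y] [Module R Y] {s : R} (hX : IsUnit (algebraMap R (Module.End R X) s))
    (hY : ∀ y : Y, s • y = 0) : ext1Zero R X Y := by
  let P := ProjectiveResolution.of (ModuleCat.of R X)
  set π₀ : P.complex.X 0 →ₗ[R] X := (P.π.f 0).hom
  have hπ₀ : Function.Surjective π₀ := (ModuleCat.epi_iff_surjective _).mp inferInstance
  let u : Module.End R X := ↑hX.unit⁻¹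
  have hu (x : X) : s • u x = x := congr($(hX.mul_val_inv) x)
  obtain ⟨c, hc⟩ := Module.projective_lifting_property π₀ (u ∘ₗ π₀) hπ₀
  have hc' (x : P.complex.X 0) : π₀ (c x) = u (π₀ x) := congr($hc x)
  -- `c` lifts `s⁻¹` to `P₀`, so `s • c - 1` maps `P₀` into `Ω`, and on `Ω` it is `-1` plus a
  -- multiple of `s`, which `φ` kills.
  let Ω := LinearMap.ker (P.π.f 0).hom
  have hΩ (x : P.complex.X 0) : x ∈ Ω ↔ π₀ x = 0 := Iff.rfl
  have hcΩ (ω : Ω) : c ω ∈ Ω := by rw [hΩ, hc', (hΩ ω).mp ω.2, map_zero]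
  let ε : P.complex.X 0 →ₗ[R] Ω :=
    (s • c - LinearMap.id).codRestrict _ fun x => by simp [hΩ, hc', hu]
  refine (P.subsingleton_ext_one_iff_forall_exists_comp_subtype_eq _).mpr fun φ =>
    ⟨-(φ ∘ₗ ε), LinearMap.ext fun ω => ?_⟩
  have hεω : ε ω = s • ⟨c ω, hcΩ ω⟩ - ω := rfl
  change -φ (ε ω) = _
  rw [hεω, map_sub, map_smul, hY, zero_sub, neg_neg]

theorem SWeaklyCotorsion.of_smul_eq_zero {S : Submonoid R} {Y : Type} [AddCommGroup Y]
    [Module R Y] {s : R} (hs : s ∈ S) (hY : ∀ y : Y, s • y = 0) : SWeaklyCotorsion R S Y :=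
  ext1Zero_of_isUnit_of_smul_eq_zero
    (IsLocalizedModule.map_units (Algebra.linearMap R (Localization S)) ⟨s, hs⟩) hY

end

theorem stmt_8 (R : Type) [CommRing R] (S : Submonoid R)
    (F : Type) [AddCommGroup F] [Module R F] (hF : SStronglyFlat R S F) :
    ∀ s : R, s ∈ S →
      Module.Projective (R ⧸ Ideal.span {s}) (F ⧸ (Ideal.span {s} • (⊤ : Submodule R F))) := by
  intro s hs
  let π := (Finsupp.linearCombination (R ⧸ Ideal.span {s})
    (id : F ⧸ (Ideal.span {s} • (⊤ : Submodule R F)) → _)).restrictScalars R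
  have hπ : Function.Surjective π := fun x => ⟨Finsupp.single x 1, by simp [π]⟩
  have hK : SWeaklyCotorsion R S (LinearMap.ker π) := .of_smul_eq_zero hs fun k =>
    Subtype.ext (Ideal.Quotient.smul_eq_zero_of_mem (Ideal.mem_span_singleton_self s) k.1)
  exact .quotient_ideal_smul_top_of_exists_lift (exists_comp_eq_of_ext1Zero hπ (hF _ hK) _)
end

section
/- The class of optimistically S-strongly flat R-modules is closed under kernels of epimorphisms: if 0 → A → B → C → 0 is exact with B and C optimistically S-strongly flat, then A is optimistically S-strongly flat. -/
/-!
Flatness of `A` is a diagram chase with tensor products: for an injective `φ : X → Y`, the map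
`φ ⊗ f` is injective because `C` is flat (so `X ⊗ f` is injective) and `B` is flat, and it
factors through `φ ⊗ A`. Flatness of `C` moreover keeps `0 → A → B → C → 0` short exact after
any base change `T ⊗_R -`. Both `LocalizedModule S F` and `F/sF` are such base changes, with
`T = R_S` and `T = R/sR`, and a short exact sequence of `T`-modules with projective middle and
right terms splits, so its left term is projective.
-/

open CategoryTheory

/-- A flat `R`-module `F` is optimistically `S`-strongly flat if `F ⊗_R R_S` is a projective
`R_S`-module and, for every `s ∈ S`, `F/sF` is a projective `R/sR`-module. -/
def OSStronglyFlat (R : Type) [CommRing R] (S : Submonoid R) (F : Type)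
    [AddCommGroup F] [Module R F] : Prop :=
  Module.Flat R F ∧
    Module.Projective (Localization S) (LocalizedModule S F) ∧
    ∀ s : R, s ∈ S →
      Module.Projective (R ⧸ Ideal.span {s}) (F ⧸ (Ideal.span {s} • (⊤ : Submodule R F)))

open TensorProduct

theorem Module.Projective.of_exact {R M N P : Type*} [Semiring R] [AddCommGroup M]
    [AddCommGroup N] [AddCommGroup P] [Module R M] [Module R N] [Module R P]
    [Module.Projective R N] [Module.Projective R P] {f : M →ₗ[R] N} {g : N →ₗ[R] P}
    (h : Function.Exact f g) (hf : Function.Injective f) (hg : Function.Surjective g) :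
    Module.Projective R M := by
  obtain ⟨s, hs⟩ := Module.projective_lifting_property g LinearMap.id hg
  obtain ⟨r, hr⟩ := ((h.split_tfae hf hg).out 0 1).mp (by exact ⟨s, hs⟩)
  exact .of_split f r hr

section ShortExact

variable {R M N P : Type*} [CommRing R] [AddCommGroup M] [AddCommGroup N] [AddCommGroup P]
  [Module R M] [Module R N] [Module R P] {f : M →ₗ[R] N} {g : N →ₗ[R] P}

theorem Module.Flat.of_exact [Module.Flat R N] [Module.Flat R P]
    (h : Function.Exact f g) (hf : Function.Injective f) (hg : Function.Surjective g) :
    Module.Flat R M := by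
  refine Module.Flat.iff_rTensor_preserves_injective_linearMap.mpr fun X Y _ _ _ _ φ hφ ↦ ?_
  have hmap : Function.Injective (TensorProduct.map φ f) := by
    rw [← LinearMap.rTensor_comp_lTensor]
    exact (Module.Flat.rTensor_preserves_injective_linearMap φ hφ).comp
      (LinearMap.lTensor_injective_of_exact_of_flat g hg f hf h X)
  rw [← LinearMap.lTensor_comp_rTensor, LinearMap.coe_comp] at hmap
  exact hmap.of_comp

theorem Module.Projective.baseChange_of_exact (T : Type*) [Ring T] [Algebra R T]
    [Module.Flat R P] [Module.Projective T (T ⊗[R] N)] [Module.Projective T (T ⊗[R] P)]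
    (h : Function.Exact f g) (hf : Function.Injective f) (hg : Function.Surjective g) :
    Module.Projective T (T ⊗[R] M) := by
  refine .of_exact (f := f.baseChange T) (g := g.baseChange T) ?_ ?_ ?_
  · simpa only [LinearMap.baseChange_eq_ltensor] using lTensor_exact T h hg
  · simpa only [LinearMap.baseChange_eq_ltensor] using
      LinearMap.lTensor_injective_of_exact_of_flat g hg f hf h T
  · exact LinearMap.baseChange_surjective T hg

end ShortExact

section Reduction

variable {R M : Type*} [CommRing R] [AddCommGroup M] [Module R M]

theorem Module.projective_localizedModule_iff (S : Submonoid R) :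
    Module.Projective (Localization S) (LocalizedModule S M) ↔
      Module.Projective (Localization S) (Localization S ⊗[R] M) :=
  let e := (IsLocalizedModule.isBaseChange S (Localization S)
    (LocalizedModule.mkLinearMap S M)).equiv
  ⟨fun _ ↦ .of_equiv e.symm, fun _ ↦ .of_equiv e⟩

theorem Module.projective_quotient_smul_top_iff (I : Ideal R) :
    Module.Projective (R ⧸ I) (M ⧸ (I • ⊤ : Submodule R M)) ↔
      Module.Projective (R ⧸ I) ((R ⧸ I) ⊗[R] M) :=
  let e := (quotTensorEquivQuotSMul M I).extendScalarsOfSurjective Ideal.Quotient.mk_surjective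
  ⟨fun _ ↦ .of_equiv e.symm, fun _ ↦ .of_equiv e⟩

end Reduction

theorem stmt_10 (R : Type) [CommRing R] (S : Submonoid R)
    (A B C : Type) [AddCommGroup A] [Module R A] [AddCommGroup B] [Module R B]
    [AddCommGroup C] [Module R C]
    (f : A →ₗ[R] B) (g : B →ₗ[R] C)
    (hf : Function.Injective f) (hg : Function.Surjective g)
    (hfg : LinearMap.range f = LinearMap.ker g)
    (hB : OSStronglyFlat R S B) (hC : OSStronglyFlat R S C) :
    OSStronglyFlat R S A := by
  obtain ⟨hBflat, hBloc, hBquot⟩ := hB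
  obtain ⟨hCflat, hCloc, hCquot⟩ := hC
  have hexact : Function.Exact f g := LinearMap.exact_iff.mpr hfg.symm
  refine ⟨.of_exact hexact hf hg, ?_, fun s hs ↦ ?_⟩
  · rw [Module.projective_localizedModule_iff] at hBloc hCloc ⊢
    exact .baseChange_of_exact _ hexact hf hg
  · have hBs := hBquot s hs
    have hCs := hCquot s hs
    rw [Module.projective_quotient_smul_top_iff] at hBs hCs ⊢
    exact .baseChange_of_exact _ hexact hf hg
end

section
/- If Z is a cochain complex of R-modules that is a filtered colimit (in the category of complexes) of contractible complexes of projective R-modules, then Z is acyclic and every kernel Ker δⁱ is a flat R-module. -/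
/-!
Each stage `D j` is contractible, hence exact, and its cycles `Ker δⁱ` form a direct summand of the
projective module `(D j)ⁱ` (split off by `δ ∘ h`), hence are projective and in particular flat.
Filtered colimits of modules are exact (AB5), so the colimit is exact and its cycles are the
filtered colimit of the cycles of the stages. Finally a filtered colimit of flat modules is flat by
the equational criterion: a relation `∑ fᵢ xᵢ = 0` in the colimit already holds at some stage,
where it is trivial, and the witnesses of its triviality map to the colimit.
-/

open CategoryTheory Limits

universe v w

lemma CategoryTheory.ShortComplex.exact_of_forall_exact_evaluation {C J : Type*} [Category C]
    [Abelian C] [Category J] {S : ShortComplex (J ⥤ C)}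
    (h : ∀ j, (S.map ((evaluation J C).obj j)).Exact) : S.Exact := by
  rw [S.exact_iff_isZero_homology]
  refine Functor.isZero _ fun j => ?_
  exact ((S.map _).exact_iff_isZero_homology.1 (h j)).of_iso
    (S.mapHomologyIso ((evaluation J C).obj j)).symm

noncomputable def CategoryTheory.ShortComplex.Exact.linearEquivKer {R : Type*} [Ring R]
    {S : ShortComplex (ModuleCat R)} (hS : S.Exact) (hf : Mono S.f) :
    S.X₁ ≃ₗ[R] LinearMap.ker S.g.hom :=
  (LinearEquiv.ofInjective S.f.hom ((ModuleCat.mono_iff_injective S.f).1 hf)).trans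
    (LinearEquiv.ofEq _ _ hS.moduleCat_range_eq_ker)

namespace ModuleCat

variable {R : Type v} [Ring R] {J : Type w} [SmallCategory J] [IsFiltered J]

instance : PreservesColimitsOfShape J (forget (ModuleCat.{w} R)) :=
  inferInstanceAs (PreservesColimitsOfShape J (forget₂ (ModuleCat.{w} R) AddCommGrpCat ⋙ forget _))

instance : HasExactColimitsOfShape J (ModuleCat.{w} R) :=
  .domain_of_functor J (forget₂ (ModuleCat.{w} R) AddCommGrpCat.{w})

variable {F : J ⥤ ModuleCat.{w} R} {c : Cocone F} (hc : IsColimit c)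
include hc

lemma exists_ι_app_eq_of_fintype {ι : Type*} [Fintype ι] (x : ι → c.pt) :
    ∃ (j : J) (y : ι → F.obj j), ∀ i, c.ι.app j (y i) = x i := by
  classical
  choose j y hy using fun i => Concrete.isColimit_exists_rep F hc (x i)
  obtain ⟨k, hk⟩ := IsFiltered.sup_objs_exists (Finset.univ.image j)
  have g (i : ι) : j i ⟶ k := (hk (Finset.mem_image_of_mem j (Finset.mem_univ i))).some
  exact ⟨k, fun i => F.map (g i) (y i), fun i => by rw [← hy i, ← ConcreteCategory.comp_apply, c.w]⟩

lemma exists_map_eq_zero_of_ι_app_eq_zero {j : J} {y : F.obj j} (hy : c.ι.app j y = 0) :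
    ∃ (k : J) (g : j ⟶ k), F.map g y = 0 := by
  obtain ⟨k, g, g', h⟩ := Concrete.isColimit_exists_of_rep_eq F hc y 0 (by rw [hy, map_zero])
  exact ⟨k, g, by rw [h, map_zero]⟩

end ModuleCat

section FilteredColimit

variable {R : Type v} [CommRing R] {J : Type w} [SmallCategory J] [IsFiltered J]

lemma Module.Flat.of_isColimit {F : J ⥤ ModuleCat.{w} R} {c : Cocone F} (hc : IsColimit c)
    (hF : ∀ j, Module.Flat R (F.obj j)) : Module.Flat R c.pt := by
  refine Module.Flat.of_forall_isTrivialRelation fun {l f x} hfx => ?_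
  obtain ⟨j, y, hy⟩ := ModuleCat.exists_ι_app_eq_of_fintype hc x
  obtain rfl : (fun i => c.ι.app j (y i)) = x := funext hy
  obtain ⟨k, g, hg⟩ := ModuleCat.exists_map_eq_zero_of_ι_app_eq_zero hc
    (y := ∑ i, f i • y i) (by simpa [map_sum, map_smul] using hfx)
  obtain ⟨m, a, z, hyz, ha⟩ := Module.Flat.isTrivialRelation_of_sum_smul_eq_zero (M := F.obj k)
    (x := fun i => F.map g (y i)) (by simpa [map_sum] using hg)
  refine ⟨m, a, fun p => c.ι.app k (z p), fun i => ?_, ha⟩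
  dsimp only at hyz ⊢
  rw [← c.w g, ConcreteCategory.comp_apply, hyz i, map_sum]
  simp only [map_smul]

lemma Module.Flat.ker_of_isColimit {F G : J ⥤ ModuleCat.{w} R} (φ : F ⟶ G) {cF : Cocone F}
    (hF : IsColimit cF) {cG : Cocone G} (hG : IsColimit cG) (g : cF.pt ⟶ cG.pt)
    (hg : ∀ j, cF.ι.app j ≫ g = φ.app j ≫ cG.ι.app j)
    (hφ : ∀ j, Module.Flat R (LinearMap.ker (φ.app j).hom)) :
    Module.Flat R (LinearMap.ker g.hom) := by
  let T : ShortComplex (J ⥤ ModuleCat.{w} R) := .mk (kernel.ι φ) φ (kernel.condition φ)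
  have hT : T.Exact := T.exact_of_f_is_kernel (kernelIsKernel φ)
  have hK (j : J) : Module.Flat R ((kernel φ).obj j) :=
    (Module.Flat.equiv_iff ((hT.map ((evaluation J _).obj j)).linearEquivKer
      (((evaluation J _).obj j).map_mono (kernel.ι φ)))).2 (hφ j)
  let f : colimit (kernel φ) ⟶ cF.pt :=
    (colimit.isColimit _).desc ((Cocone.precompose (kernel.ι φ)).obj cF)
  have hf : ∀ j, colimit.ι (kernel φ) j ≫ f = (kernel.ι φ).app j ≫ cF.ι.app j :=
    (colimit.isColimit _).fac _
  exact (Module.Flat.equiv_iff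
    ((colim.exact_mapShortComplex hT (colimit.isColimit _) hF hG f g hf hg).linearEquivKer
      (colim.map_mono' (kernel.ι φ) (colimit.isColimit _) hF f hf))).1
    (Module.Flat.of_isColimit (colimit.isColimit (kernel φ)) hK)

end FilteredColimit

namespace HomologicalComplex

variable {ι : Type*} {c : ComplexShape ι}

lemma exactAt_of_homotopy_id_zero {C : Type*} [Category C] [Preadditive C]
    {K : HomologicalComplex C c} (h : Homotopy (𝟙 K) 0) (i : ι) [K.HasHomology i] :
    K.ExactAt i := by
  rw [exactAt_iff_isZero_homology, IsZero.iff_id_eq_zero]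
  simpa using h.homologyMap_eq i

lemma exactAt_of_isColimit {C J : Type*} [Category C] [Abelian C] [Category J]
    [HasColimitsOfShape J C] [HasExactColimitsOfShape J C] {D : J ⥤ HomologicalComplex C c}
    {s : Cocone D} (hs : IsColimit s) (i : ι) (h : ∀ j, (D.obj j).ExactAt i) :
    s.pt.ExactAt i := by
  let S := (ShortComplex.functorEquivalence J C).inverse.obj
    (D ⋙ shortComplexFunctor' C c (c.prev i) i (c.next i))
  have hS : S.Exact := ShortComplex.exact_of_forall_exact_evaluation fun j =>
    ((D.obj j).exactAt_iff' (c.prev i) i (c.next i) (by simp) (by simp)).1 (h j)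
  rw [exactAt_iff' _ (c.prev i) i (c.next i) (by simp) (by simp)]
  exact colim.exact_mapShortComplex hS (isColimitOfPreserves (eval C c _) hs)
    (isColimitOfPreserves (eval C c i) hs) (isColimitOfPreserves (eval C c _) hs) _ _
    (fun j => (s.ι.app j).comm _ _) (fun j => (s.ι.app j).comm _ _)

lemma flat_ker_d_of_isColimit {R : Type v} [CommRing R] {J : Type w} [SmallCategory J]
    [IsFiltered J] {D : J ⥤ HomologicalComplex (ModuleCat.{w} R) c} {s : Cocone D}
    (hs : IsColimit s) (i i' : ι) (h : ∀ j, Module.Flat R (LinearMap.ker ((D.obj j).d i i').hom)) :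
    Module.Flat R (LinearMap.ker (s.pt.d i i').hom) :=
  Module.Flat.ker_of_isColimit (Functor.whiskerLeft D (dNatTrans (ModuleCat.{w} R) c i i'))
    (isColimitOfPreserves (eval _ c i) hs) (isColimitOfPreserves (eval _ c i') hs) _
    (fun j => (s.ι.app j).comm i i') h

end HomologicalComplex

namespace CochainComplex

variable {R : Type*} [Ring R] {K : CochainComplex (ModuleCat R) ℤ} (h : Homotopy (𝟙 K) 0)

include h in
lemma d_homotopy_hom_of_d_eq_zero {n : ℤ} {x : K.X n} (hx : K.d n (n + 1) x = 0) :
    K.d (n - 1) n (h.hom n (n - 1) x) = x := by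
  have hcomm := h.comm n
  rw [dNext_eq _ (show (ComplexShape.up ℤ).Rel n (n + 1) by simp),
    prevD_eq _ (show (ComplexShape.up ℤ).Rel (n - 1) n by simp)] at hcomm
  simpa [hx] using (ConcreteCategory.congr_hom hcomm x).symm

include h in
lemma projective_ker_d_of_homotopy_id_zero (n : ℤ) [Module.Projective R (K.X n)] :
    Module.Projective R (LinearMap.ker (K.d n (n + 1)).hom) := by
  refine .of_split (M := K.X n) (LinearMap.ker _).subtype
    (LinearMap.codRestrict _ ((K.d (n - 1) n).hom ∘ₗ (h.hom n (n - 1)).hom) fun x => ?_) ?_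
  · exact congr($(K.d_comp_d (n - 1) n (n + 1)) (h.hom n (n - 1) x))
  · ext ⟨x, hx⟩
    exact d_homotopy_hom_of_d_eq_zero h hx

end CochainComplex

theorem stmt_17 (R : Type) [CommRing R] (J : Type) [SmallCategory J] [IsFiltered J]
    (D : J ⥤ CochainComplex (ModuleCat R) ℤ) [Limits.HasColimit D]
    (hcontr : ∀ j : J, Nonempty (Homotopy (𝟙 (D.obj j)) 0))
    (hproj : ∀ (j : J) (i : ℤ), Module.Projective R ((D.obj j).X i))
    (Z : CochainComplex (ModuleCat R) ℤ) (hZ : Nonempty (Z ≅ Limits.colimit D)) :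
    (∀ i : ℤ, Z.ExactAt i) ∧
      ∀ i : ℤ, Module.Flat R ↥(LinearMap.ker (Z.d i (i + 1)).hom) := by
  obtain ⟨e⟩ := hZ
  -- reindex over a category in the universe of the modules, where filtered colimits are exact
  have : IsFiltered (AsSmall.{u_1} J) := .of_equivalence AsSmall.equiv
  have hs : IsColimit (((colimit.cocone D).extend e.inv).whisker AsSmall.down) :=
    ((colimit.isColimit D).ofIsoColimit (Cocone.extendIso _ e.symm)).whiskerEquivalence
      AsSmall.equiv.symm
  refine ⟨fun i => HomologicalComplex.exactAt_of_isColimit hs i fun j =>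
      HomologicalComplex.exactAt_of_homotopy_id_zero (hcontr _).some i,
    fun i => HomologicalComplex.flat_ker_d_of_isColimit hs i (i + 1) fun j => ?_⟩
  dsimp only [Functor.comp_obj]
  have := hproj (AsSmall.down.obj j) i
  have := CochainComplex.projective_ker_d_of_homotopy_id_zero (hcontr (AsSmall.down.obj j)).some i
  infer_instance
end
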